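/- In the max-distance network creation game with n agents and α ≥ 2/(n−2), if every equilibrium graph is a tree, then the price of anarchy is less than 3. -/

import Mathlib

/-!
Max-distance network creation game (Demaine et al.):
`n` agents, agent `v` buys edges to the agents in `s v`, each at cost `α`.
The resulting graph has an edge `(u,v)` iff `u ∈ s v` or `v ∈ s u`.
Agent `v`'s cost is `α * |s v|` plus its eccentricity (max distance, `⊤` if
disconnected). A profile is a (pure Nash) equilibrium if no agent can strictly
decrease its cost by unilaterally changing its edge set.
-/

open SimpleGraph
open scoped ENNReal

namespace NCG

/-- The undirected graph created by strategy profile `s`. -/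
def graph (n : ℕ) (s : Fin n → Finset (Fin n)) : SimpleGraph (Fin n) :=
  SimpleGraph.fromRel (fun u v => v ∈ s u)

/-- Eccentricity `D(v) = max_u d_G(v,u)`, valued in `ℕ∞`. -/
noncomputable def ecc {n : ℕ} (G : SimpleGraph (Fin n)) (v : Fin n) : ℕ∞ :=
  ⨆ u, G.edist v u

/-- The cost of agent `v` under profile `s`: `α·|s v| + D(v)` (infinite if the
graph is disconnected). -/
noncomputable def cost {n : ℕ} (α : ℝ) (s : Fin n → Finset (Fin n)) (v : Fin n) : ℝ≥0∞ :=
  ENNReal.ofReal α * (s v).card + (ecc (graph n s) v : ℝ≥0∞)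

/-- Pure Nash equilibrium: no agent can strictly decrease its cost by a
unilateral deviation. -/
def IsEquilibrium {n : ℕ} (α : ℝ) (s : Fin n → Finset (Fin n)) : Prop :=
  ∀ (v : Fin n) (t : Finset (Fin n)), cost α s v ≤ cost α (Function.update s v t) v

/-- Radius `rad(G) = min_v D(v)`. -/
noncomputable def radius {n : ℕ} (G : SimpleGraph (Fin n)) : ℕ∞ :=
  ⨅ v, ecc G v

/-- Diameter `diam(G) = max_v D(v)`. -/
noncomputable def diam {n : ℕ} (G : SimpleGraph (Fin n)) : ℕ∞ :=
  ⨆ v, ecc G v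

/-- Interpret an extended natural number as a real number (`⊤ ↦ 0`). -/
noncomputable def entoR (x : ℕ∞) : ℝ := ((x : ℝ≥0∞)).toReal

/-- `T` is a shortest path tree of `G` rooted at `b`: a spanning tree of `G`
preserving all distances from `b`. -/
def IsSPT {n : ℕ} (G T : SimpleGraph (Fin n)) (b : Fin n) : Prop :=
  T ≤ G ∧ T.IsTree ∧ ∀ v, T.edist b v = G.edist b v

/-- `p` is the parent of `a` in the tree `T` rooted at `b`. -/
def IsParent {n : ℕ} (T : SimpleGraph (Fin n)) (b a p : Fin n) : Prop :=
  T.Adj a p ∧ T.edist b p + 1 = T.edist b a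

/-- The vertex set `B` (with more than two vertices) induces a biconnected
subgraph: removing any single vertex leaves it connected. -/
def IsBiconnected {n : ℕ} (G : SimpleGraph (Fin n)) (B : Finset (Fin n)) : Prop :=
  2 < B.card ∧ ∀ v ∈ B, (G.induce ((B : Set (Fin n)) \ {v})).Connected

/-- `B` is (the vertex set of) a biconnected component of `G`: a maximal
biconnected subgraph with more than two vertices. -/
def IsBicomp {n : ℕ} (G : SimpleGraph (Fin n)) (B : Finset (Fin n)) : Prop :=
  IsBiconnected G B ∧ ∀ B' : Finset (Fin n), B ⊆ B' → IsBiconnected G B' → B' = B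

/-- The induced subgraph of `G` on the vertex set `B`. -/
def Hgraph {n : ℕ} (G : SimpleGraph (Fin n)) (B : Finset (Fin n)) :
    SimpleGraph ((B : Set (Fin n))) :=
  G.induce (B : Set (Fin n))

/-- The degree of `v` inside the induced subgraph on `B`. -/
noncomputable def degH {n : ℕ} (G : SimpleGraph (Fin n)) (B : Finset (Fin n)) (v : Fin n) : ℕ :=
  {u : Fin n | u ∈ B ∧ G.Adj v u}.ncard

/-- A min cycle: a cycle whose internal (cycle) distances agree with the
distances in `G`, i.e. an isometric cycle. -/
def IsMinCycle {n : ℕ} (G : SimpleGraph (Fin n)) {v : Fin n} (c : G.Walk v v) : Prop :=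
  c.IsCycle ∧ ∀ x₁ ∈ c.support, ∀ x₂ ∈ c.support,
    c.toSubgraph.spanningCoe.edist x₁ x₂ = G.edist x₁ x₂

/-- A directed cycle: going around the cycle, each vertex buys the edge to its
successor (in one of the two cyclic orientations). -/
def IsDirectedCycle {n : ℕ} (s : Fin n → Finset (Fin n)) {v : Fin n}
    (c : (graph n s).Walk v v) : Prop :=
  (∀ d ∈ c.darts, d.toProd.2 ∈ s d.toProd.1) ∨ (∀ d ∈ c.darts, d.toProd.1 ∈ s d.toProd.2)

/-- A shopping vertex of the biconnected component `B` w.r.t. the shortest path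
tree `T`: a vertex of `B` buying an edge of the component that is not in `T`. -/
def IsShopping {n : ℕ} (s : Fin n → Finset (Fin n)) (T : SimpleGraph (Fin n))
    (B : Finset (Fin n)) (u : Fin n) : Prop :=
  u ∈ B ∧ ∃ w ∈ B, w ∈ s u ∧ (graph n s).Adj u w ∧ ¬ T.Adj u w

/-- The social cost of profile `s`. -/
noncomputable def socialCost {n : ℕ} (α : ℝ) (s : Fin n → Finset (Fin n)) : ℝ≥0∞ :=
  ∑ v, cost α s v

end NCG

/-!
An equilibrium tree has diameter at most `2α + 3`: an agent `u` may buy an edge to a centre `m`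
of the tree, so `D(u) ≤ α + D(m) + 1`, and in a tree `2 D(m) ≤ diam + 1`. At equilibrium no edge
is paid for twice, so the tree costs at most `α (n - 1) + n · diam`. On the other side, if `k`
vertices have eccentricity `1`, every other vertex has eccentricity at least `2` and the graph
has at least `(k (n - 1) + (n - k) k) / 2` edges; when `α (n - 2) ≥ 2` this makes every profile
cost at least as much as the star, `α (n - 1) + 2n - 1`. With `diam ≤ min (2α + 3) (n - 1)` the
ratio of the two is below `3`.
-/

namespace SimpleGraph

open Finset

variable {V : Type*} {G : SimpleGraph V}

theorem Walk.dist_add_dist_le_length {u v w : V} (p : G.Walk u v) (hw : w ∈ p.support) :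
    G.dist u w + G.dist w v ≤ p.length := by
  classical
  have hsplit := congrArg Walk.length (p.take_spec hw)
  rw [Walk.length_append] at hsplit
  have := dist_le (p.takeUntil w hw)
  have := dist_le (p.dropUntil w hw)
  omega

theorem IsAcyclic.mem_support_of_mem_support_isPath (hG : G.IsAcyclic) {u w m : V}
    {p : G.Walk u w} (hp : p.IsPath) (hm : m ∈ p.support) (q : G.Walk u w) : m ∈ q.support := by
  classical
  have : q.bypass = p :=
    congrArg Subtype.val ((hG.subsingleton_path u w).elim ⟨_, q.bypass_isPath⟩ ⟨p, hp⟩)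
  exact q.support_bypass_subset_support (this ▸ hm)

/-- The midpoint of a diametral path lies on the path from every vertex to one of its ends. -/
theorem IsTree.exists_two_mul_dist_le_diam_add_one [Finite V] (hG : G.IsTree) :
    ∃ m, ∀ x, 2 * G.dist m x ≤ G.diam + 1 := by
  have hc := hG.connected
  have := hc.nonempty
  have hfin : G.ediam ≠ ⊤ := connected_iff_ediam_ne_top.1 hc
  obtain ⟨u, w, huw⟩ := G.exists_dist_eq_diam
  obtain ⟨p, hp, hpl⟩ := hc.exists_path_of_dist u w
  set a := (G.diam + 1) / 2
  have hum : G.dist u (p.getVert a) ≤ a :=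
    (dist_le (p.take a)).trans (by simp [Walk.take_length])
  have hmw : G.dist (p.getVert a) w ≤ G.diam - a :=
    (dist_le (p.drop a)).trans (by simp [Walk.drop_length, hpl, huw])
  have hmid : G.diam ≤ G.dist u (p.getVert a) + G.dist (p.getVert a) w :=
    huw ▸ hc.dist_triangle
  refine ⟨p.getVert a, fun x => ?_⟩
  obtain ⟨q₁, -, hq₁⟩ := hc.exists_path_of_dist u x
  obtain ⟨q₂, -, hq₂⟩ := hc.exists_path_of_dist x w
  have hux : G.dist u x ≤ G.diam := dist_le_diam hfin
  have hxw : G.dist x w ≤ G.diam := dist_le_diam hfin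
  have hm := hG.isAcyclic.mem_support_of_mem_support_isPath hp (p.getVert_mem_support a)
    (q₁.append q₂)
  rcases (Walk.mem_support_append_iff _ _).1 hm with h | h
  · have := q₁.dist_add_dist_le_length h
    omega
  · have := q₂.dist_add_dist_le_length h
    rw [dist_comm (u := x)] at this
    omega

theorem diam_lt_card [Fintype V] [Nonempty V] : G.diam < Fintype.card V := by
  obtain ⟨u, v, huv⟩ := G.exists_dist_eq_diam
  rw [← huv]
  by_cases h : G.Reachable u v
  · obtain ⟨p, hp, hl⟩ := h.exists_path_of_dist
    exact hl ▸ hp.length_lt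
  · rw [dist_eq_zero_of_not_reachable h]
    exact Fintype.card_pos

theorem Connected.eccent_ne_top [Finite V] (hG : G.Connected) (v : V) : G.eccent v ≠ ⊤ :=
  have := hG.nonempty
  ne_top_of_le_ne_top (connected_iff_ediam_ne_top.1 hG) eccent_le_ediam

theorem Connected.two_le_toNat_eccent_add [Finite V] [Nontrivial V] (hG : G.Connected) (v : V) :
    2 ≤ (G.eccent v).toNat + if G.eccent v ≤ 1 then 1 else 0 := by
  obtain ⟨e, he⟩ := ENat.ne_top_iff_exists.1 (hG.eccent_ne_top v)
  have hne := G.eccent_ne_zero v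
  rw [← he] at hne ⊢
  have : e ≠ 0 := by exact_mod_cast hne
  split_ifs with h
  · simp only [ENat.toNat_natCast]
    omega
  · have : ¬ e ≤ 1 := by exact_mod_cast h
    simp only [ENat.toNat_natCast]
    omega

theorem Connected.two_mul_card_le_sum_eccent [Fintype V] [Nontrivial V] (hG : G.Connected) :
    2 * Fintype.card V ≤ ∑ v, (G.eccent v).toNat + #{v | G.eccent v ≤ 1} := by
  rw [card_filter, ← sum_add_distrib, ← card_univ, mul_comm, ← smul_eq_mul, ← sum_const]
  exact sum_le_sum fun v _ => hG.two_le_toNat_eccent_add v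

theorem card_mul_add_le_two_mul_card_edgeFinset [Fintype V] [DecidableRel G.Adj]
    (K : Finset V) (hK : ∀ v ∈ K, ∀ w, v ≠ w → G.Adj v w) :
    #K * (Fintype.card V - 1) + (Fintype.card V - #K) * #K ≤ 2 * #G.edgeFinset := by
  classical
  have hdeg : ∀ v, (if v ∈ K then Fintype.card V - 1 else #K) ≤ G.degree v := by
    intro v
    rw [← card_neighborFinset_eq_degree]
    split_ifs with hv
    · rw [← card_univ, ← card_erase_of_mem (mem_univ v)]
      exact card_le_card fun w hw =>
        (mem_neighborFinset _ _ _).2 (hK v hv w (ne_of_mem_erase hw).symm)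
    · exact card_le_card fun w hw =>
        (mem_neighborFinset _ _ _).2 (hK w hw v (fun h => hv (h ▸ hw))).symm
  rw [← sum_degrees_eq_twice_card_edges]
  refine le_trans (le_of_eq ?_) (sum_le_sum fun v _ => hdeg v)
  rw [sum_ite, sum_const, sum_const, smul_eq_mul, smul_eq_mul, filter_mem_eq_inter, univ_inter,
    filter_not, filter_mem_eq_inter, univ_inter, ← compl_eq_univ_sdiff, card_compl]

/-- `α (n - 1) + (2n - 1)` is the cost of a star. -/
theorem Connected.star_cost_le [Fintype V] [DecidableRel G.Adj]
    (hG : G.Connected) {α : ℝ} (hn : 3 ≤ Fintype.card V)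
    (hα : 2 ≤ α * (Fintype.card V - 2)) :
    α * (Fintype.card V - 1) + (2 * Fintype.card V - 1) ≤
      α * #G.edgeFinset + ∑ v, ((G.eccent v).toNat : ℝ) := by
  have : Nontrivial V := Fintype.one_lt_card_iff_nontrivial.1 (by omega)
  set K : Finset V := {v | G.eccent v ≤ 1}
  have hKn : #K ≤ Fintype.card V := card_le_univ K
  have hn : (3 : ℝ) ≤ Fintype.card V := by exact_mod_cast hn
  have hkn : (#K : ℝ) ≤ Fintype.card V := by exact_mod_cast hKn
  have hE : (Fintype.card V : ℝ) ≤ #G.edgeFinset + 1 := by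
    have := hG.card_vert_le_card_edgeSet_add_one
    rw [Nat.card_eq_fintype_card, Nat.card_eq_fintype_card, ← edgeFinset_card] at this
    exact_mod_cast this
  have hK : (#K : ℝ) * (Fintype.card V - 1) + (Fintype.card V - #K) * #K ≤
      2 * #G.edgeFinset := by
    have := card_mul_add_le_two_mul_card_edgeFinset K fun v hv =>
      (eccent_le_one_iff v).1 (mem_filter.1 hv).2
    have := (Nat.cast_le (α := ℝ)).2 this
    push_cast [Nat.cast_sub hKn, Nat.cast_sub (show 1 ≤ Fintype.card V by omega)] at this
    exact this
  have hS : 2 * (Fintype.card V : ℝ) ≤ ∑ v, ((G.eccent v).toNat : ℝ) + #K := by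
    exact_mod_cast hG.two_mul_card_le_sum_eccent
  have hα0 : 0 ≤ α := by nlinarith
  rcases lt_or_ge (#K : ℝ) 1 with hk1 | hk1
  · nlinarith [mul_nonneg hα0 (by linarith : (0 : ℝ) ≤ #G.edgeFinset + 1 - Fintype.card V)]
  · -- `2 (E - (n - 1)) ≥ (k - 1) (2n - k - 2) ≥ (k - 1) (n - 2)` for `k = #K` and `E` edges
    nlinarith [mul_nonneg (sub_nonneg.2 hα) (sub_nonneg.2 hk1),
      mul_nonneg (mul_nonneg hα0 (sub_nonneg.2 hk1)) (sub_nonneg.2 hkn)]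

end SimpleGraph

namespace NCG

open Finset

variable {n : ℕ} {α : ℝ} {s : Fin n → Finset (Fin n)}

theorem graph_adj {u v : Fin n} :
    (graph n s).Adj u v ↔ u ≠ v ∧ (v ∈ s u ∨ u ∈ s v) := by
  simp [graph]

theorem ecc_eq_eccent (G : SimpleGraph (Fin n)) (v : Fin n) : ecc G v = G.eccent v := rfl

theorem card_edgeFinset_graph_le [Fintype (graph n s).edgeSet] :
    #(graph n s).edgeFinset ≤ ∑ v, (s v).card := by
  classical
  rw [← card_sigma]
  refine le_trans (card_le_card fun e he => ?_) (card_image_le (f := fun p => s(p.1, p.2)))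
  induction e using Sym2.ind with
  | _ x y =>
    rw [SimpleGraph.mem_edgeFinset, SimpleGraph.mem_edgeSet, graph_adj] at he
    simp only [mem_image, mem_sigma, mem_univ, true_and, Sigma.exists]
    rcases he.2 with h | h
    · exact ⟨x, y, h, rfl⟩
    · exact ⟨y, x, h, Sym2.eq_swap⟩

theorem graph_update_erase {u v : Fin n} (h : u = v ∨ v ∈ s u) :
    graph n (Function.update s v ((s v).erase u)) = graph n s := by
  ext x y
  simp only [graph_adj, Function.update_apply]
  grind

theorem IsEquilibrium.ecc_le (hs : IsEquilibrium α s) (v b : Fin n) :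
    (ecc (graph n s) v : ℝ≥0∞) ≤ ENNReal.ofReal α + ecc (graph n s) b + 1 := by
  set s' := Function.update s v (insert b (s v))
  have hle : graph n s ≤ graph n s' := fun x y hxy => by
    rw [graph_adj] at hxy ⊢
    refine ⟨hxy.1, hxy.2.imp (fun h => ?_) (fun h => ?_)⟩ <;>
      · simp only [s', Function.update_apply]
        split_ifs <;> simp_all
  have hvb : (graph n s').edist v b ≤ 1 := by
    rcases eq_or_ne v b with rfl | hne
    · simp
    · exact (SimpleGraph.edist_eq_one_iff_adj.2 (graph_adj.2 ⟨hne, Or.inl (by simp [s'])⟩)).le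
  have hecc : ecc (graph n s') v ≤ ecc (graph n s) b + 1 :=
    iSup_le fun u => calc
      (graph n s').edist v u ≤ (graph n s').edist v b + (graph n s').edist b u :=
        SimpleGraph.edist_triangle
      _ ≤ 1 + ecc (graph n s) b := add_le_add hvb
        ((SimpleGraph.edist_anti hle).trans (SimpleGraph.edist_le_eccent (u := b)))
      _ = ecc (graph n s) b + 1 := add_comm _ _
  have hcard : ((insert b (s v)).card : ℝ≥0∞) ≤ (s v).card + 1 := by
    exact_mod_cast card_insert_le b (s v)
  have hdev := hs v (insert b (s v))
  rw [cost, cost, Function.update_self] at hdev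
  refine (ENNReal.add_le_add_iff_left (a := ENNReal.ofReal α * (s v).card)
    (by finiteness)).1 (hdev.trans ?_)
  calc ENNReal.ofReal α * (insert b (s v)).card + (ecc (graph n s') v : ℝ≥0∞)
      ≤ ENNReal.ofReal α * ((s v).card + 1) + (ecc (graph n s) b + 1 : ℕ∞) := by
        gcongr
    _ = _ := by push_cast; ring

theorem IsEquilibrium.ne_and_not_mem_of_mem (hs : IsEquilibrium α s) (hα : 0 < α)
    (hc : (graph n s).Connected) {u v : Fin n} (hu : u ∈ s v) : u ≠ v ∧ v ∉ s u := by
  rw [← not_or]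
  intro h
  have hdev := hs v ((s v).erase u)
  rw [cost, cost, Function.update_self, graph_update_erase h] at hdev
  have hlt : ((((s v).erase u).card : ℕ) : ℝ≥0∞) < (s v).card := by
    exact_mod_cast card_erase_lt_of_mem hu
  refine hdev.not_gt (ENNReal.add_lt_add_right ?_ ?_)
  · simpa [ecc_eq_eccent] using hc.eccent_ne_top v
  · exact (ENNReal.mul_lt_mul_iff_right (by simpa using hα) ENNReal.ofReal_ne_top).2 hlt

theorem IsEquilibrium.sum_card_le_card_edgeFinset (hs : IsEquilibrium α s) (hα : 0 < α)
    (hc : (graph n s).Connected) [Fintype (graph n s).edgeSet] :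
    ∑ v, (s v).card ≤ #(graph n s).edgeFinset := by
  rw [← card_sigma]
  refine card_le_card_of_injOn (fun p => s(p.1, p.2)) (fun p hp => ?_) fun p hp q hq hpq => ?_
  · rw [mem_coe, mem_sigma] at hp
    rw [mem_coe, SimpleGraph.mem_edgeFinset, SimpleGraph.mem_edgeSet, graph_adj]
    exact ⟨(hs.ne_and_not_mem_of_mem hα hc hp.2).1.symm, Or.inl hp.2⟩
  · rw [mem_coe, mem_sigma] at hp hq
    rcases Sym2.eq_iff.1 hpq with ⟨h₁, h₂⟩ | ⟨h₁, h₂⟩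
    · exact Sigma.ext h₁ (heq_of_eq h₂)
    · exact absurd (h₁ ▸ h₂ ▸ hq.2) (hs.ne_and_not_mem_of_mem hα hc hp.2).2

theorem IsEquilibrium.diam_le_of_isTree (hs : IsEquilibrium α s) (hα : 0 ≤ α)
    (hT : (graph n s).IsTree) :
    ((graph n s).diam : ℝ) ≤ 2 * α + 3 := by
  have := hT.connected.nonempty
  obtain ⟨m, hm⟩ := hT.exists_two_mul_dist_le_diam_add_one
  obtain ⟨u, w, huw⟩ := (graph n s).exists_dist_eq_diam
  set d := (graph n s).diam
  have hdiam : (d : ℕ∞) ≤ ecc (graph n s) u := by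
    rw [← huw, (hT.connected u w).coe_dist_eq_edist]
    exact SimpleGraph.edist_le_eccent
  have hecc : ecc (graph n s) m ≤ ((d + 1) / 2 : ℕ) := by
    refine iSup_le fun x => ?_
    rw [← (hT.connected m x).coe_dist_eq_edist]
    exact_mod_cast (show (graph n s).dist m x ≤ (d + 1) / 2 by have := hm x; omega)
  have key : ENNReal.ofReal d ≤ ENNReal.ofReal (α + ((d + 1) / 2 : ℕ) + 1) := calc
    ENNReal.ofReal d = ((d : ℕ∞) : ℝ≥0∞) := by simp
    _ ≤ ENNReal.ofReal α + ecc (graph n s) m + 1 :=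
      (ENat.toENNReal_le.2 hdiam).trans (hs.ecc_le u m)
    _ ≤ ENNReal.ofReal α + (((d + 1) / 2 : ℕ) : ℕ∞) + 1 := by gcongr
    _ = ENNReal.ofReal (α + ((d + 1) / 2 : ℕ) + 1) := by
      rw [ENNReal.ofReal_add (by positivity) zero_le_one, ENNReal.ofReal_add hα (by positivity)]
      simp
  rw [ENNReal.ofReal_le_ofReal_iff (by positivity)] at key
  have h2 : 2 * (((d + 1) / 2 : ℕ) : ℝ) ≤ d + 1 := by
    exact_mod_cast Nat.mul_div_le _ 2
  linarith

theorem socialCost_eq_ofReal (hα : 0 ≤ α) (hc : (graph n s).Connected) :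
    socialCost α s = ENNReal.ofReal
      (α * ∑ v, ((s v).card : ℝ) + ∑ v, (((graph n s).eccent v).toNat : ℝ)) := by
  rw [mul_sum, ← sum_add_distrib, ENNReal.ofReal_sum_of_nonneg fun v _ => by positivity]
  refine sum_congr rfl fun v _ => ?_
  rw [cost, ecc_eq_eccent, ← ENat.natCast_toNat (hc.eccent_ne_top v),
    ENNReal.ofReal_add (by positivity) (by positivity), ENNReal.ofReal_mul hα]
  simp

theorem socialCost_eq_top [NeZero n] (hc : ¬ (graph n s).Connected) : socialCost α s = ⊤ :=
  ENNReal.sum_eq_top.2 ⟨0, mem_univ _, by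
    simp [cost, ecc_eq_eccent, SimpleGraph.eccent_eq_top_of_not_connected hc]⟩

theorem IsEquilibrium.socialCost_le_of_isTree (hs : IsEquilibrium α s) (hα : 0 < α)
    (hT : (graph n s).IsTree) :
    socialCost α s ≤ ENNReal.ofReal (α * (n - 1) + n * (graph n s).diam) := by
  classical
  have hcard := (hs.sum_card_le_card_edgeFinset hα hT.connected).trans_eq
    (Nat.eq_sub_of_add_eq (hT.card_edgeFinset.trans (Fintype.card_fin n)))
  have := hT.connected.nonempty
  have hecc : ∀ v, (((graph n s).eccent v).toNat : ℝ) ≤ (graph n s).diam := fun v =>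
    Nat.cast_le.2 (ENat.toNat_le_toNat SimpleGraph.eccent_le_ediam
      (SimpleGraph.connected_iff_ediam_ne_top.1 hT.connected))
  rw [socialCost_eq_ofReal hα.le hT.connected]
  refine ENNReal.ofReal_le_ofReal (add_le_add ?_ ?_)
  · have : (n : ℝ) - 1 = ((n - 1 : ℕ) : ℝ) := by
      rw [Nat.cast_sub (Fin.pos_iff_nonempty.2 this), Nat.cast_one]
    rw [this, ← Nat.cast_sum]
    gcongr
  · calc ∑ v, (((graph n s).eccent v).toNat : ℝ)
        ≤ ∑ _v : Fin n, ((graph n s).diam : ℝ) := sum_le_sum fun v _ => hecc v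
      _ = n * (graph n s).diam := by simp

theorem star_cost_le_socialCost (hn : 3 ≤ n) (hα : 2 ≤ α * (n - 2))
    (t : Fin n → Finset (Fin n)) :
    ENNReal.ofReal (α * (n - 1) + (2 * n - 1)) ≤ socialCost α t := by
  classical
  by_cases hc : (graph n t).Connected
  · have hα0 : 0 ≤ α := by
      have : (3 : ℝ) ≤ n := by exact_mod_cast hn
      nlinarith
    have hstar := hc.star_cost_le (α := α) (by simpa using hn) (by simpa using hα)
    simp only [Fintype.card_fin] at hstar
    rw [socialCost_eq_ofReal hα0 hc]
    refine ENNReal.ofReal_le_ofReal (hstar.trans ?_)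
    gcongr
    exact_mod_cast card_edgeFinset_graph_le
  · have : NeZero n := ⟨by omega⟩
    simp [socialCost_eq_top hc]

end NCG

open NCG

/-- for `α ≥ 2/(n−2)`, if every equilibrium graph is a tree, then
the price of anarchy is less than 3: every equilibrium has social cost less
than 3 times the optimal social cost. -/
theorem price_of_anarchy_lt_three (n : ℕ) (hn : 3 ≤ n) (α : ℝ)
    (hα : 2 / ((n : ℝ) - 2) ≤ α)
    (htree : ∀ t : Fin n → Finset (Fin n), IsEquilibrium α t → (graph n t).IsTree) :
    ∀ s : Fin n → Finset (Fin n), IsEquilibrium α s →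
      socialCost α s < 3 * ⨅ t : Fin n → Finset (Fin n), socialCost α t := by
  intro s hs
  have hn' : (3 : ℝ) ≤ n := by exact_mod_cast hn
  have hα' : 2 ≤ α * (n - 2) := (div_le_iff₀ (by linarith)).1 hα
  have hα0 : 0 < α := (div_pos two_pos (by linarith)).trans_le hα
  have hT := htree s hs
  have hD := hs.diam_le_of_isTree hα0.le hT
  have hDn : ((graph n s).diam : ℝ) + 1 ≤ n := by
    have := hT.connected.nonempty
    exact_mod_cast Fintype.card_fin n ▸ (graph n s).diam_lt_card
  calc socialCost α s ≤ ENNReal.ofReal (α * (n - 1) + n * (graph n s).diam) :=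
        hs.socialCost_le_of_isTree hα0 hT
    _ < ENNReal.ofReal (3 * (α * (n - 1) + (2 * n - 1))) := by
        rw [ENNReal.ofReal_lt_ofReal_iff (by nlinarith)]
        -- `n · diam = (n - 1) diam + diam ≤ (n - 1) (2α + 3) + (n - 1)`
        nlinarith [mul_le_mul_of_nonneg_left hD (by linarith : (0 : ℝ) ≤ n - 1)]
    _ = 3 * ENNReal.ofReal (α * (n - 1) + (2 * n - 1)) := by
        rw [ENNReal.ofReal_mul zero_le_three, ENNReal.ofReal_ofNat]
    _ ≤ 3 * ⨅ t, socialCost α t := by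
        gcongr
        exact le_iInf (star_cost_le_socialCost hn hα')
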